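/- arXiv:1607.03471 — 4 statements merged into one kernel-verified Lean document; each statement's English description precedes it below -/
import Mathlib

section
/- Let G be a graph with finite corner rank α. If some vertex of corner rank α is adjacent to every vertex of G_{α−1}, then every vertex of corner rank α is adjacent to every vertex of G_{α−1}. -/
open Classical

/-- A finite reflexive graph: adjacency is symmetric and every vertex is
adjacent to itself (closed neighborhood `N[v] = {u | Adj v u}`). -/
structure RefGraph (V : Type*) where
  Adj : V → V → Prop
  symm : ∀ u v, Adj u v → Adj v u
  refl : ∀ v, Adj v v

namespace RefGraph

variable {V : Type*}

/-- `w` strictly corners `v` within the induced subgraph on `S`,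
i.e. `N_S[v] ⊊ N_S[w]`. -/
def StrictCornersIn (G : RefGraph V) (S : Set V) (w v : V) : Prop :=
  w ∈ S ∧ v ∈ S ∧ (∀ u ∈ S, G.Adj v u → G.Adj w u) ∧ ∃ u ∈ S, G.Adj w u ∧ ¬ G.Adj v u

/-- `v` is a strict corner of the induced subgraph on `S`. -/
def IsStrictCorner (G : RefGraph V) (S : Set V) (v : V) : Prop :=
  ∃ w, G.StrictCornersIn S w v

/-- `S` induces a clique. -/
def IsCliqueSet (G : RefGraph V) (S : Set V) : Prop :=
  ∀ u ∈ S, ∀ v ∈ S, G.Adj u v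

/-- `lvl k` is the vertex set of the graph `G_{k+1}` of the corner ranking
procedure: start with all vertices and repeatedly delete all strict corners. -/
def lvl (G : RefGraph V) : ℕ → Set V
  | 0 => Set.univ
  | k + 1 => {v ∈ G.lvl k | ¬ G.IsStrictCorner (G.lvl k) v}

/-- The corner rank of a vertex: the stage (1-indexed) at which it is a strict
corner, or at which the remaining graph is a clique; `∞` if neither ever occurs. -/
noncomputable def cr (G : RefGraph V) (v : V) : ℕ∞ :=
  sInf {n : ℕ∞ | ∃ m : ℕ, n = (m : ℕ∞) + 1 ∧ v ∈ G.lvl m ∧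
    (G.IsStrictCorner (G.lvl m) v ∨ G.IsCliqueSet (G.lvl m))}

/-- The vertex set of `Gₖ`: the vertices of corner rank at least `k`. -/
def GkSet (G : RefGraph V) (k : ℕ) : Set V := {v | (k : ℕ∞) ≤ G.cr v}

/-- The corner rank of the graph: the largest corner rank of a vertex. -/
noncomputable def crGraph (G : RefGraph V) [Fintype V] : ℕ∞ :=
  Finset.univ.sup fun v => G.cr v

/-- The projection map `fₖ` on a single vertex `u` of `Gₖ`. -/
noncomputable def fk (G : RefGraph V) (k : ℕ) (u : V) : Set V :=
  if (k : ℕ∞) < G.cr u then {u}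
  else {w | w ∈ G.GkSet (k + 1) ∧ G.StrictCornersIn (G.GkSet k) w u}

/-- The projection map `Fₖ`: `F₁` is the identity and `Fₖ₊₁ = fₖ ∘ Fₖ`. -/
noncomputable def Fk (G : RefGraph V) : ℕ → V → Set V
  | 0, v => {v}
  | 1, v => {v}
  | k + 2, v => ⋃ u ∈ G.Fk (k + 1) v, G.fk (k + 1) u

/-- `r` is `k`-cornered by `c`: for `k = 0`, `c = r`; for `k ≥ 1`, some
`r' ∈ Fₖ(r)` is cornered by `c` in the subgraph induced by `V(Gₖ) ∪ {c}`. -/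
def kCornered (G : RefGraph V) : ℕ → V → V → Prop
  | 0, c, r => c = r
  | k + 1, c, r => ∃ r' ∈ G.Fk (k + 1) r,
      ∀ u, (u ∈ G.GkSet (k + 1) ∨ u = c) → G.Adj r' u → G.Adj c u

/-- With the cop at `c`, the vertex `r` is `k`-proj-safe: `cr r ≥ k` and some
`c' ∈ Fₖ(c)` is not adjacent to `r`. -/
def ProjSafe (G : RefGraph V) (k : ℕ) (c r : V) : Prop :=
  (k : ℕ∞) ≤ G.cr r ∧ ∃ c' ∈ G.Fk k c, ¬ G.Adj c' r

/-- The cop at `c` can win within `k` cop moves against the robber at `r`,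
robber to move. -/
def WinWithin (G : RefGraph V) : ℕ → V → V → Prop
  | 0, c, r => c = r
  | k + 1, c, r => c = r ∨ ∀ r₁, G.Adj r r₁ → ∃ c₁, G.Adj c c₁ ∧ G.WinWithin k c₁ r₁

/-- The cop at `c` can guarantee catching the robber at `r` within `n` cop
moves, cop to move. -/
def CanCatch (G : RefGraph V) : ℕ → V → V → Prop
  | 0, c, r => c = r
  | n + 1, c, r => c = r ∨ ∃ c', G.Adj c c' ∧
      (c' = r ∨ ∀ r', G.Adj r r' → G.CanCatch n c' r')

/-- The cop has a winning strategy: some initial placement from which she can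
guarantee capture in some bounded number of moves, whatever the robber does. -/
def CopWin (G : RefGraph V) : Prop :=
  ∃ (n : ℕ) (c₀ : V), ∀ r₀ : V, G.CanCatch n c₀ r₀

/-- The capture time: the least `n` such that the cop has an initial placement
guaranteeing capture within `n` cop moves. -/
noncomputable def capt (G : RefGraph V) : ℕ :=
  sInf {n : ℕ | ∃ c₀ : V, ∀ r₀ : V, G.CanCatch n c₀ r₀}

/-- A graph of finite corner rank `α` is `1`-cop-win if some vertex of corner
rank `α` is adjacent to every vertex of `G_{α-1}`. -/
def OneCopWin (G : RefGraph V) (α : ℕ) : Prop :=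
  ∃ x, G.cr x = (α : ℕ∞) ∧ ∀ u, ((α - 1 : ℕ) : ℕ∞) ≤ G.cr u → G.Adj x u

/-- `r`-cop-win for `r ∈ {0,1}`. -/
def RCopWin (G : RefGraph V) (r α : ℕ) : Prop :=
  (r = 1 ∧ G.OneCopWin α) ∨ (r = 0 ∧ ¬ G.OneCopWin α)

/-- The largest finite corner rank occurring in `G` (0 if none occurs). -/
noncomputable def gammaMax (G : RefGraph V) : ℕ :=
  sSup {n : ℕ | ∃ v, G.cr v = (n : ℕ∞)}

/-- `F_∞`: equal to `F_{γ+1}` where `γ` is the largest finite corner rank, and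
the identity (`F₁`) when no vertex has finite corner rank. -/
noncomputable def Finf (G : RefGraph V) : V → Set V :=
  G.Fk (G.gammaMax + 1)

/-- `e` lists the vertices as a dismantling ordering: every vertex except the
last is cornered, in the induced subgraph on it and the later vertices, by some
later vertex. -/
def IsDismantlingOrdering (G : RefGraph V) {n : ℕ} (e : Fin n ≃ V) : Prop :=
  ∀ i : Fin n, (i : ℕ) + 1 < n →
    ∃ j : Fin n, i < j ∧ e j ≠ e i ∧
      ∀ u, (∃ m : Fin n, i ≤ m ∧ e m = u) → G.Adj (e i) u → G.Adj (e j) u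

/-- `G` has a dismantling ordering. -/
def HasDismantling (G : RefGraph V) [Fintype V] : Prop :=
  ∃ e : Fin (Fintype.card V) ≃ V, G.IsDismantlingOrdering e

end RefGraph

/-!
Write `α = k + 1`. For `k ≥ 1` the vertices of rank at least `α - 1 = k` are those of `G_k`,
the graph whose strict corners receive rank `k`. A vertex `x` of `G_k` adjacent to all of
`G_k` corners every other vertex `y` of `G_k`; if `y` missed a vertex of `G_k`, the corner
would be strict and `y` would have rank `k`, not `k + 1`. For `k = 0`, `x` is adjacent to
every vertex, so it is not a strict corner of `G`; unless `G` is a clique, `x` then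
survives to `G_2` and has rank at least `2`.
-/

namespace RefGraph

variable {V : Type*} (G : RefGraph V)

theorem lvl_antitone : Antitone G.lvl :=
  antitone_nat_of_succ_le fun _ _ hv => hv.1

theorem cr_le_of_mem_lvl {v : V} {k : ℕ} (hv : v ∈ G.lvl k)
    (h : G.IsStrictCorner (G.lvl k) v ∨ G.IsCliqueSet (G.lvl k)) :
    G.cr v ≤ (k : ℕ∞) + 1 :=
  sInf_le ⟨k, rfl, hv, h⟩

theorem one_le_cr (v : V) : 1 ≤ G.cr v :=
  le_sInf fun _ ⟨_, hn, _⟩ => hn ▸ le_add_self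

theorem mem_lvl_of_lt_cr {v : V} : ∀ {k : ℕ}, (k : ℕ∞) < G.cr v → v ∈ G.lvl k
  | 0, _ => Set.mem_univ v
  | k + 1, h => by
    have hk : v ∈ G.lvl k := mem_lvl_of_lt_cr <| lt_of_le_of_lt (by simp) h
    refine ⟨hk, fun hc => ?_⟩
    have := G.cr_le_of_mem_lvl hk (Or.inl hc)
    push_cast at h
    exact (lt_of_lt_of_le h this).false

theorem lt_cr_of_mem_lvl {v : V} {k : ℕ} (hv : v ∈ G.lvl k)
    (hnc : ∀ m < k, ¬ G.IsCliqueSet (G.lvl m)) : (k : ℕ∞) < G.cr v := by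
  refine (ENat.add_one_le_iff (ENat.natCast_ne_top k)).mp (le_sInf ?_)
  rintro _ ⟨m, rfl, hm, hc⟩
  have hkm : k ≤ m := by
    by_contra! hmk
    rcases hc with hc | hc
    · exact (G.lvl_antitone (Nat.succ_le_of_lt hmk) hv).2 hc
    · exact hnc m hmk hc
  gcongr

theorem not_isCliqueSet_lvl_of_lt_cr {v : V} {m : ℕ} (h : (m : ℕ∞) + 1 < G.cr v) :
    ¬ G.IsCliqueSet (G.lvl m) := fun hc =>
  have hv : v ∈ G.lvl m := G.mem_lvl_of_lt_cr <| lt_of_le_of_lt le_self_add h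
  (lt_of_lt_of_le h (G.cr_le_of_mem_lvl hv (Or.inr hc))).false

/-- `G.lvl k` is `G_{k+1}` only while the procedure has not stopped at a clique, which a
vertex of rank above `k` guarantees. -/
theorem mem_lvl_iff_lt_cr {x v : V} {k : ℕ} (hx : (k : ℕ∞) < G.cr x) :
    v ∈ G.lvl k ↔ (k : ℕ∞) < G.cr v :=
  ⟨fun hv => G.lt_cr_of_mem_lvl hv fun _ hm =>
      G.not_isCliqueSet_lvl_of_lt_cr <| lt_of_le_of_lt (by exact_mod_cast hm) hx,
    G.mem_lvl_of_lt_cr⟩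

theorem not_isStrictCorner_of_forall_adj {S : Set V} {x : V} (hx : ∀ u ∈ S, G.Adj x u) :
    ¬ G.IsStrictCorner S x :=
  fun ⟨_, _, _, _, u, hu, _, hxu⟩ => hxu (hx u hu)

theorem forall_adj_of_not_isStrictCorner {S : Set V} {x y : V} (hxS : x ∈ S)
    (hx : ∀ u ∈ S, G.Adj x u) (hyS : y ∈ S) (hy : ¬ G.IsStrictCorner S y) :
    ∀ u ∈ S, G.Adj y u := by
  by_contra! ⟨u, hu, hyu⟩
  exact hy ⟨x, hxS, hyS, fun t ht _ => hx t ht, u, hu, hx u hu, hyu⟩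

end RefGraph

theorem all_top_rank_vertices_dominate_general
    {V : Type*} (G : RefGraph V) (α : ℕ)
    (x : V) (hx : G.cr x = (α : ℕ∞))
    (hdom : ∀ u, ((α - 1 : ℕ) : ℕ∞) ≤ G.cr u → G.Adj x u) :
    ∀ y, G.cr y = (α : ℕ∞) → ∀ u, ((α - 1 : ℕ) : ℕ∞) ≤ G.cr u → G.Adj y u := by
  intro y hy u hu
  obtain ⟨k, rfl⟩ : ∃ k, α = k + 1 :=
    Nat.exists_eq_add_one.mpr (by exact_mod_cast hx ▸ G.one_le_cr x)
  cases k with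
  | zero =>
    have hclique : G.IsCliqueSet (G.lvl 0) := by
      by_contra hnc
      have hx1 : x ∈ G.lvl 1 :=
        ⟨trivial, G.not_isStrictCorner_of_forall_adj fun u _ => hdom u (by simp)⟩
      have := G.lt_cr_of_mem_lvl hx1 fun m hm => by rwa [Nat.lt_one_iff.mp hm]
      simp [hx] at this
    exact hclique y trivial u trivial
  | succ j =>
    have hlvl : ∀ v, v ∈ G.lvl j ↔ ((j + 1 : ℕ) : ℕ∞) ≤ G.cr v := fun v => by
      rw [G.mem_lvl_iff_lt_cr (x := x) (by rw [hx]; norm_cast; omega),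
        ← ENat.add_one_le_iff (ENat.natCast_ne_top j), Nat.cast_succ]
    have hxj : x ∈ G.lvl j := (hlvl x).mpr (by simp [hx])
    obtain ⟨hyj, hync⟩ : y ∈ G.lvl (j + 1) := G.mem_lvl_of_lt_cr (by rw [hy]; norm_cast; omega)
    exact G.forall_adj_of_not_isStrictCorner hxj (fun w hw => hdom w ((hlvl w).mp hw))
      hyj hync u ((hlvl u).mpr hu)

/-- If `G` has finite corner rank `α` and some vertex of corner
rank `α` is adjacent to every vertex of `G_{α-1}`, then every vertex of corner
rank `α` is adjacent to every vertex of `G_{α-1}`. -/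
theorem all_top_rank_vertices_dominate
    {V : Type*} [Fintype V] [Nonempty V] (G : RefGraph V) (α : ℕ)
    (hα : G.crGraph = (α : ℕ∞))
    (x : V) (hx : G.cr x = (α : ℕ∞))
    (hdom : ∀ u, ((α - 1 : ℕ) : ℕ∞) ≤ G.cr u → G.Adj x u) :
    ∀ y, G.cr y = (α : ℕ∞) → ∀ u, ((α - 1 : ℕ) : ℕ∞) ≤ G.cr u → G.Adj y u :=
  all_top_rank_vertices_dominate_general G α x hx hdom
end

section
/- For a graph G with corner rank α, every projection map fₖ (1 ≤ k ≤ α−1) and every Fₖ (1 ≤ k ≤ α) is a homomorphism: whenever u and v are adjacent vertices of the domain graph and u* ∈ fₖ(u), v* ∈ fₖ(v) (respectively u* ∈ Fₖ(u), v* ∈ Fₖ(v)), then u* and v* are adjacent. -/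
open Classical

namespace RefGraph

variable {V : Type*}

lemma cr_ge_one' (G : RefGraph V) (v : V) : 1 ≤ G.cr v := by
  apply le_sInf
  rintro n ⟨m, rfl, -⟩
  exact le_add_self

lemma fk_subset' (G : RefGraph V) (k : ℕ) (u : V) :
    G.fk k u ⊆ G.GkSet (k + 1) := by
  unfold fk
  split
  · rename_i hlt
    intro w hw
    rw [Set.mem_singleton_iff] at hw
    subst hw
    have : ((k : ℕ∞) + 1) ≤ G.cr w := Order.add_one_le_of_lt hlt
    simpa [GkSet, Nat.cast_add] using this
  · intro w hw
    exact hw.1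

lemma fk_hom' (G : RefGraph V) (k : ℕ) (u v : V)
    (hu : u ∈ G.GkSet k) (hv : v ∈ G.GkSet k) (h : G.Adj u v)
    {u' v' : V} (hu' : u' ∈ G.fk k u) (hv' : v' ∈ G.fk k v) :
    G.Adj u' v' := by
  unfold fk at hu' hv'
  split at hu' <;> split at hv'
  · rw [Set.mem_singleton_iff] at hu' hv'; subst hu'; subst hv'; exact h
  · rw [Set.mem_singleton_iff] at hu'; subst hu'
    obtain ⟨-, -, -, hsub, -⟩ := hv'
    exact G.symm _ _ (hsub u' hu (G.symm _ _ h))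
  · rw [Set.mem_singleton_iff] at hv'; subst hv'
    obtain ⟨-, -, -, hsub, -⟩ := hu'
    exact hsub v' hv h
  · obtain ⟨-, hu'S, -, hsubu, -⟩ := hu'
    obtain ⟨-, -, -, hsubv, -⟩ := hv'
    have h1 : G.Adj u' v := hsubu v hv h
    exact G.symm _ _ (hsubv u' hu'S (G.symm _ _ h1))

lemma Fk_subset' (G : RefGraph V) : ∀ (k : ℕ) (v : V),
    G.Fk (k + 1) v ⊆ G.GkSet (k + 1) := by
  intro k
  induction k with
  | zero =>
    intro v w hw
    rw [show G.Fk 1 v = {v} from rfl, Set.mem_singleton_iff] at hw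
    subst hw
    simpa [GkSet] using G.cr_ge_one' w
  | succ k ih =>
    intro v w hw
    rw [show G.Fk (k + 2) v = ⋃ u ∈ G.Fk (k + 1) v, G.fk (k + 1) u from rfl] at hw
    simp only [Set.mem_iUnion] at hw
    obtain ⟨u, _, hw⟩ := hw
    exact G.fk_subset' (k + 1) u hw

lemma Fk_hom' (G : RefGraph V) : ∀ (k : ℕ) (u v : V), G.Adj u v →
    ∀ u' ∈ G.Fk (k + 1) u, ∀ v' ∈ G.Fk (k + 1) v, G.Adj u' v' := by
  intro k
  induction k with
  | zero =>
    intro u v h u' hu' v' hv'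
    rw [show G.Fk 1 u = {u} from rfl, Set.mem_singleton_iff] at hu'
    rw [show G.Fk 1 v = {v} from rfl, Set.mem_singleton_iff] at hv'
    subst hu'; subst hv'; exact h
  | succ k ih =>
    intro u v h u' hu' v' hv'
    rw [show G.Fk (k + 2) u = ⋃ w ∈ G.Fk (k + 1) u, G.fk (k + 1) w from rfl] at hu'
    rw [show G.Fk (k + 2) v = ⋃ w ∈ G.Fk (k + 1) v, G.fk (k + 1) w from rfl] at hv'
    simp only [Set.mem_iUnion] at hu' hv'
    obtain ⟨u₁, hu₁, hu'⟩ := hu'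
    obtain ⟨v₁, hv₁, hv'⟩ := hv'
    exact G.fk_hom' (k + 1) u₁ v₁ (G.Fk_subset' k u hu₁) (G.Fk_subset' k v hv₁)
      (ih u v h u₁ hu₁ v₁ hv₁) hu' hv'

end RefGraph
/-- For a graph `G` of corner rank `α`, every projection map `fₖ`
(`1 ≤ k ≤ α - 1`) and every `Fₖ` (`1 ≤ k ≤ α`) is a homomorphism: adjacent
vertices of the domain graph are sent to adjacent vertices, elementwise. -/
theorem projection_maps_are_homomorphisms
    {V : Type*} [Fintype V] [Nonempty V] (G : RefGraph V) (α : ℕ∞)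
    (hα : G.crGraph = α) :
    (∀ k : ℕ, 1 ≤ k → (k : ℕ∞) + 1 ≤ α →
      ∀ u v : V, u ∈ G.GkSet k → v ∈ G.GkSet k → G.Adj u v →
        ∀ u' ∈ G.fk k u, ∀ v' ∈ G.fk k v, G.Adj u' v') ∧
    (∀ k : ℕ, 1 ≤ k → (k : ℕ∞) ≤ α →
      ∀ u v : V, G.Adj u v →
        ∀ u' ∈ G.Fk k u, ∀ v' ∈ G.Fk k v, G.Adj u' v') := by
  constructor
  · intro k _ _ u v hu hv h u' hu' v' hv'
    exact G.fk_hom' k u v hu hv h hu' hv'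
  · intro k hk _ u v h u' hu' v' hv'
    obtain ⟨m, rfl⟩ := Nat.exists_eq_add_of_le hk
    exact G.Fk_hom' m u v h u' (by simpa [Nat.add_comm] using hu')
      v' (by simpa [Nat.add_comm] using hv')
end

section
/- Let c be a vertex of a graph G with corner rank at least k, and let c' ∈ Fₖ(c). Then every vertex of corner rank at least k that is adjacent to c is also adjacent to c'; that is, N_{≥k}[c] ⊆ N_{≥k}[c'], where N_{≥k}[v] denotes the set of vertices in N[v] of corner rank at least k. -/
open Classical

/-- If `c` has corner rank at least `k` and `c' ∈ Fₖ(c)`, then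
every vertex of corner rank at least `k` adjacent to `c` is adjacent to `c'`,
i.e. `N_{≥k}[c] ⊆ N_{≥k}[c']`. -/
theorem projection_closed_neighborhood_subset
    {V : Type*} [Fintype V] [Nonempty V] (G : RefGraph V)
    (k : ℕ) (hk : 1 ≤ k) (c c' : V)
    (hc : (k : ℕ∞) ≤ G.cr c) (hc' : c' ∈ G.Fk k c) :
    ∀ w : V, (k : ℕ∞) ≤ G.cr w → G.Adj c w → G.Adj c' w := by
  have one_le_cr : ∀ v : V, (1 : ℕ∞) ≤ G.cr v := by
    intro v
    refine le_sInf ?_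
    rintro n ⟨m, rfl, -⟩
    exact le_add_self
  -- main induction
  have main : ∀ m : ℕ, ∀ c c' : V, c' ∈ G.Fk (m + 1) c →
      (((m + 1 : ℕ) : ℕ∞) ≤ G.cr c' ∧
        ∀ w : V, ((m + 1 : ℕ) : ℕ∞) ≤ G.cr w → G.Adj c w → G.Adj c' w) := by
    intro m
    induction m with
    | zero =>
      intro c c' hc'
      simp only [RefGraph.Fk, Set.mem_singleton_iff] at hc'
      subst hc'
      exact ⟨by simpa using one_le_cr c', fun w _ h => h⟩
    | succ n ih =>
      intro c c' hc'
      simp only [RefGraph.Fk, Set.mem_iUnion] at hc'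
      obtain ⟨u, hu, hcu⟩ := hc'
      obtain ⟨hcru, hadju⟩ := ih c u hu
      unfold RefGraph.fk at hcu
      by_cases h : ((n + 1 : ℕ) : ℕ∞) < G.cr u
      · rw [if_pos h] at hcu
        rw [Set.mem_singleton_iff] at hcu
        subst hcu
        constructor
        · have : ((n + 1 : ℕ) : ℕ∞) + 1 ≤ G.cr c' := Order.add_one_le_of_lt h
          refine le_trans ?_ this
          push_cast
          ring_nf
          exact le_rfl
        · intro w hw hcw
          refine hadju w ?_ hcw
          refine le_trans ?_ hw
          exact_mod_cast Nat.le_succ (n + 1)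
      · rw [if_neg h] at hcu
        obtain ⟨hc'2, hc'1, hu1, hcorn, -⟩ := hcu
        constructor
        · exact hc'2
        · intro w hw hcw
          have hw1 : w ∈ G.GkSet (n + 1) := by
            refine le_trans ?_ hw
            exact_mod_cast Nat.le_succ (n + 1)
          exact hcorn w hw1 (hadju w hw1 hcw)
  intro w hw hcw
  obtain ⟨m, rfl⟩ := Nat.exists_eq_add_of_le hk
  rw [Nat.add_comm] at hc' hw
  exact (main m c c' hc').2 w hw hcw
end

section
/- Let k ≥ 2. Suppose the cop is at vertex c₀ and the robber is at a vertex r₀ that is k-proj-safe with respect to c₀. Then for every cop move c₁ ∈ N[c₀], there exists a robber move r₁ ∈ N[r₀] such that r₁ is (k−1)-proj-safe with respect to c₁. -/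
open Classical

namespace RefGraph

variable {V : Type*} (G : RefGraph V)

/-- Auxiliary: the stage-`m` condition in the definition of `cr`. -/
def AuxPst (G : RefGraph V) (m : ℕ) (v : V) : Prop :=
  v ∈ G.lvl m ∧ (G.IsStrictCorner (G.lvl m) v ∨ G.IsCliqueSet (G.lvl m))

lemma aux_cr_le_of_Pst {m : ℕ} {v : V} (h : G.AuxPst m v) : G.cr v ≤ (m : ℕ∞) + 1 :=
  sInf_le ⟨m, rfl, h.1, h.2⟩

lemma aux_cr_gt_iff (m : ℕ) (v : V) :
    (m : ℕ∞) < G.cr v ↔ ∀ i < m, ¬ G.AuxPst i v := by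
  rw [cr, ← ENat.add_one_le_iff (ENat.coe_ne_top m), le_sInf_iff]
  constructor
  · intro H i him hP
    have h1 := H ((i : ℕ∞) + 1) ⟨i, rfl, hP.1, hP.2⟩
    have : m + 1 ≤ i + 1 := by exact_mod_cast h1
    omega
  · rintro H n ⟨i, rfl, h1, h2⟩
    have hi : ¬ i < m := fun hlt => H i hlt ⟨h1, h2⟩
    have : m + 1 ≤ i + 1 := by omega
    exact_mod_cast this

lemma aux_coe_succ_le_cr_iff (m : ℕ) (v : V) :
    ((m + 1 : ℕ) : ℕ∞) ≤ G.cr v ↔ (m : ℕ∞) < G.cr v := by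
  rw [Nat.cast_add, Nat.cast_one, ENat.add_one_le_iff (ENat.coe_ne_top m)]

lemma aux_one_le_cr (v : V) : ((1 : ℕ) : ℕ∞) ≤ G.cr v := by
  rw [show (1 : ℕ) = 0 + 1 from rfl, aux_coe_succ_le_cr_iff]
  rw [aux_cr_gt_iff]
  omega

lemma aux_lvl_mono {i j : ℕ} (h : i ≤ j) : G.lvl j ⊆ G.lvl i := by
  induction j with
  | zero => simp_all
  | succ n ih =>
      rcases Nat.lt_or_ge i (n + 1) with hlt | hge
      · exact fun v hv => ih (by omega) hv.1
      · have : i = n + 1 := by omega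
        subst this; exact fun v hv => hv

lemma aux_mem_lvl_of_cr_gt {m : ℕ} {v : V} (h : (m : ℕ∞) < G.cr v) : v ∈ G.lvl m := by
  rw [aux_cr_gt_iff] at h
  induction m with
  | zero => trivial
  | succ n ih =>
      refine ⟨ih (fun i hi => h i (by omega)), fun hc => ?_⟩
      exact h n (by omega) ⟨ih (fun i hi => h i (by omega)), Or.inl hc⟩

lemma aux_lvl_subset {m : ℕ} {r : V} (hr : (m : ℕ∞) < G.cr r) :
    G.lvl m ⊆ {v | (m : ℕ∞) < G.cr v} := by
  intro u hu
  simp only [Set.mem_setOf_eq]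
  by_contra hc
  rw [aux_cr_gt_iff] at hc
  push_neg at hc
  obtain ⟨i, him, hP⟩ := hc
  rcases hP.2 with hcor | hcl
  · have hu' : u ∈ G.lvl (i + 1) := G.aux_lvl_mono (by omega) hu
    exact hu'.2 hcor
  · have hri : r ∈ G.lvl i :=
      G.aux_mem_lvl_of_cr_gt (lt_trans (by exact_mod_cast him) hr)
    have h1 : G.cr r ≤ (i : ℕ∞) + 1 := G.aux_cr_le_of_Pst ⟨hri, Or.inr hcl⟩
    have h2 : ((i : ℕ∞) + 1 : ℕ∞) ≤ (m : ℕ∞) := by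
      have : i + 1 ≤ m := by omega
      exact_mod_cast this
    exact absurd (lt_of_lt_of_le hr (le_trans h1 h2)) (lt_irrefl _)

lemma aux_GkSet_eq_lvl {m : ℕ} {r : V} (hr : (m : ℕ∞) < G.cr r) :
    G.GkSet (m + 1) = G.lvl m := by
  ext v
  rw [GkSet, Set.mem_setOf_eq, aux_coe_succ_le_cr_iff]
  exact ⟨fun h => G.aux_mem_lvl_of_cr_gt h, fun h => G.aux_lvl_subset hr h⟩

/-- Corner promotion: a strictly cornered vertex has a cornerer that is itself
not strictly cornered (take one with maximal closed neighborhood). -/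
lemma aux_exists_uncornered_cornerer [Fintype V] {S : Set V} {u : V}
    (h : G.IsStrictCorner S u) :
    ∃ w, G.StrictCornersIn S w u ∧ ¬ G.IsStrictCorner S w := by
  classical
  set n : V → ℕ := fun d => (Finset.univ.filter (fun x => x ∈ S ∧ G.Adj d x)).card with hn
  obtain ⟨d0, hd0⟩ := h
  set D : Finset V := Finset.univ.filter (fun d => G.StrictCornersIn S d u) with hD
  have hDne : D.Nonempty := ⟨d0, by simp [hD, hd0]⟩
  obtain ⟨d, hdD, hmax⟩ := D.exists_max_image n hDne
  have hd : G.StrictCornersIn S d u := by simpa [hD] using hdD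
  refine ⟨d, hd, ?_⟩
  rintro ⟨d', hd'⟩
  have hd'u : G.StrictCornersIn S d' u := by
    refine ⟨hd'.1, hd.2.1, fun x hx hax => hd'.2.2.1 x hx (hd.2.2.1 x hx hax), ?_⟩
    obtain ⟨x, hx, hax, hnx⟩ := hd.2.2.2
    exact ⟨x, hx, hd'.2.2.1 x hx hax, hnx⟩
  have hlt : n d < n d' := by
    apply Finset.card_lt_card
    constructor
    · intro x hx
      simp only [Finset.mem_filter, Finset.mem_univ, true_and] at hx ⊢
      exact ⟨hx.1, hd'.2.2.1 x hx.1 hx.2⟩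
    · intro hsub
      obtain ⟨x, hx, hax, hnx⟩ := hd'.2.2.2
      have := hsub (by simp only [Finset.mem_filter, Finset.mem_univ, true_and]; exact ⟨hx, hax⟩)
      simp only [Finset.mem_filter, Finset.mem_univ, true_and] at this
      exact hnx this.2
  have := hmax d' (by simp [hD, hd'u])
  omega

lemma aux_Fk_succ {j : ℕ} (hj : 1 ≤ j) (v : V) :
    G.Fk (j + 1) v = ⋃ u ∈ G.Fk j v, G.fk j u := by
  match j, hj with
  | (i + 1), _ => rfl

lemma aux_fk_cases {j : ℕ} {w w' : V} (h : w' ∈ G.fk j w) :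
    (w' = w ∧ (j : ℕ∞) < G.cr w) ∨
      (w' ∈ G.GkSet (j + 1) ∧ G.StrictCornersIn (G.GkSet j) w' w) := by
  rw [fk] at h
  split at h
  · exact Or.inl ⟨h, by assumption⟩
  · exact Or.inr h

lemma aux_cr_ge_of_mem_Fk : ∀ {j : ℕ}, 1 ≤ j → ∀ (c w : V),
    w ∈ G.Fk j c → ((j : ℕ) : ℕ∞) ≤ G.cr w := by
  intro j hj
  induction j, hj using Nat.le_induction with
  | base => intro c w hw; rw [show G.Fk 1 c = {c} from rfl, Set.mem_singleton_iff] at hw; subst hw; exact G.aux_one_le_cr _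
  | succ j hj ih =>
      intro c w' hw'
      rw [aux_Fk_succ G hj] at hw'
      simp only [Set.mem_iUnion] at hw'
      obtain ⟨w, hw, hfk⟩ := hw'
      rcases G.aux_fk_cases hfk with ⟨rfl, hlt⟩ | ⟨hmem, _⟩
      · exact (G.aux_coe_succ_le_cr_iff j _).2 hlt
      · exact hmem

lemma aux_adj_of_mem_Fk {c₀ c₁ : V} (hadj : G.Adj c₀ c₁) :
    ∀ {j : ℕ}, 1 ≤ j → ∀ (w x : V), w ∈ G.Fk j c₀ → x ∈ G.Fk j c₁ → G.Adj w x := by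
  intro j hj
  induction j, hj using Nat.le_induction with
  | base =>
      intro w x hw hx
      rw [show G.Fk 1 c₀ = {c₀} from rfl, Set.mem_singleton_iff] at hw
      rw [show G.Fk 1 c₁ = {c₁} from rfl, Set.mem_singleton_iff] at hx
      subst hw; subst hx; exact hadj
  | succ j hj ih =>
      intro w' x' hw' hx'
      rw [aux_Fk_succ G hj] at hw' hx'
      simp only [Set.mem_iUnion] at hw' hx'
      obtain ⟨w, hw, hfw⟩ := hw'
      obtain ⟨x, hx, hfx⟩ := hx'
      have hwx : G.Adj w x := ih w x hw hx
      have hxj : x ∈ G.GkSet j := G.aux_cr_ge_of_mem_Fk hj c₁ x hx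
      have hw'x : G.Adj w' x := by
        rcases G.aux_fk_cases hfw with ⟨rfl, _⟩ | ⟨_, hsc⟩
        · exact hwx
        · exact hsc.2.2.1 x hxj hwx
      have hw'j : w' ∈ G.GkSet j := by
        have h1 : ((j + 1 : ℕ) : ℕ∞) ≤ G.cr w' := by
          rcases G.aux_fk_cases hfw with ⟨rfl, hlt⟩ | ⟨hmem, _⟩
          · exact (G.aux_coe_succ_le_cr_iff j _).2 hlt
          · exact hmem
        exact le_trans (by exact_mod_cast Nat.le_succ j) h1
      rcases G.aux_fk_cases hfx with ⟨rfl, _⟩ | ⟨_, hsc⟩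
      · exact hw'x
      · exact G.symm _ _ (hsc.2.2.1 w' hw'j (G.symm _ _ hw'x))

lemma aux_exists_mem_Fk [Fintype V] {r : V} :
    ∀ {j : ℕ}, 1 ≤ j → ((j : ℕ) : ℕ∞) ≤ G.cr r → ∀ c : V,
      ∃ x ∈ G.Fk j c, ((j : ℕ) : ℕ∞) ≤ G.cr x := by
  intro j hj
  induction j, hj using Nat.le_induction with
  | base => intro _ c; exact ⟨c, rfl, G.aux_one_le_cr c⟩
  | succ j hj ih =>
      intro hr c
      have hr' : ((j : ℕ) : ℕ∞) ≤ G.cr r :=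
        le_trans (by exact_mod_cast Nat.le_succ j) hr
      obtain ⟨x, hx, hcrx⟩ := ih hr' c
      by_cases hlt : (j : ℕ∞) < G.cr x
      · refine ⟨x, ?_, (G.aux_coe_succ_le_cr_iff j x).2 hlt⟩
        rw [aux_Fk_succ G hj]
        simp only [Set.mem_iUnion]
        refine ⟨x, hx, ?_⟩
        rw [fk, if_pos hlt]; rfl
      · -- cr x = j : find the stage and promote
        have hex : ∃ i < j, G.AuxPst i x := by
          by_contra hc
          push_neg at hc
          exact hlt ((G.aux_cr_gt_iff j x).2 fun i hi => hc i hi)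
        obtain ⟨i, hij, hP⟩ := hex
        have hcrle : G.cr x ≤ (i : ℕ∞) + 1 := G.aux_cr_le_of_Pst hP
        have hji : j = i + 1 := by
          have h1 : ((j : ℕ) : ℕ∞) ≤ (i : ℕ∞) + 1 := le_trans hcrx hcrle
          have : j ≤ i + 1 := by exact_mod_cast h1
          omega
        subst hji
        have hwitr : (i : ℕ∞) < G.cr r :=
          lt_of_lt_of_le (by exact_mod_cast (by omega : i < i + 1 + 1)) hr
        have hnotcl : ¬ G.IsCliqueSet (G.lvl i) := by
          intro hcl
          have hri : r ∈ G.lvl i := G.aux_mem_lvl_of_cr_gt hwitr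
          have h1 : G.cr r ≤ (i : ℕ∞) + 1 := G.aux_cr_le_of_Pst ⟨hri, Or.inr hcl⟩
          have h2 : ((i + 1 + 1 : ℕ) : ℕ∞) ≤ (i : ℕ∞) + 1 := le_trans hr h1
          have : i + 1 + 1 ≤ i + 1 := by exact_mod_cast h2
          omega
        have hcorner : G.IsStrictCorner (G.GkSet (i + 1)) x := by
          rw [G.aux_GkSet_eq_lvl hwitr]
          exact hP.2.resolve_right hnotcl
        obtain ⟨d, hd, hdnc⟩ := G.aux_exists_uncornered_cornerer hcorner
        have hdS : (i : ℕ∞) < G.cr d := (G.aux_coe_succ_le_cr_iff i d).1 hd.1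
        have hdgt : ((i + 1 : ℕ) : ℕ∞) < G.cr d := by
          rw [aux_cr_gt_iff]
          intro i' hi'
          rcases Nat.lt_succ_iff_lt_or_eq.1 hi' with hlt' | rfl
          · exact (G.aux_cr_gt_iff i d).1 hdS i' hlt'
          · rintro ⟨hmem, hcor | hcl⟩
            · rw [← G.aux_GkSet_eq_lvl hwitr] at hcor
              exact hdnc hcor
            · exact hnotcl hcl
        refine ⟨d, ?_, (G.aux_coe_succ_le_cr_iff (i + 1) d).2 hdgt⟩
        rw [aux_Fk_succ G hj]
        simp only [Set.mem_iUnion]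
        refine ⟨x, hx, ?_⟩
        rw [fk, if_neg hlt]
        exact ⟨(G.aux_coe_succ_le_cr_iff (i + 1) d).2 hdgt, hd⟩

end RefGraph
/-- For `k ≥ 2`, if the robber at `r₀` is `k`-proj-safe with
respect to the cop at `c₀`, then for every cop move `c₁ ∈ N[c₀]` the robber has
a move `r₁ ∈ N[r₀]` which is `(k-1)`-proj-safe with respect to `c₁`. -/
theorem robber_response_proj_safe
    {V : Type*} [Fintype V] [Nonempty V] (G : RefGraph V)
    (k : ℕ) (hk : 2 ≤ k) (c₀ r₀ : V) (h : G.ProjSafe k c₀ r₀) :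
    ∀ c₁ : V, G.Adj c₀ c₁ → ∃ r₁ : V, G.Adj r₀ r₁ ∧ G.ProjSafe (k - 1) c₁ r₁ := by
  intro c₁ hadj
  obtain ⟨i, rfl⟩ : ∃ i, k = i + 2 := ⟨k - 2, by omega⟩
  have hk1 : i + 2 - 1 = i + 1 := by omega
  rw [hk1]
  obtain ⟨hcrr, c', hc'F, hc'r⟩ := h
  have hj : 1 ≤ i + 1 := by omega
  -- robber's rank facts
  have hr2 : ((i + 2 : ℕ) : ℕ∞) ≤ G.cr r₀ := hcrr
  have hr1 : ((i + 1 : ℕ) : ℕ∞) ≤ G.cr r₀ :=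
    le_trans (by exact_mod_cast Nat.le_succ (i + 1)) hr2
  have hwitr : ((i : ℕ) : ℕ∞) < G.cr r₀ :=
    lt_of_lt_of_le (by exact_mod_cast Nat.lt_succ_self i) hr1
  have hr0S : r₀ ∈ G.GkSet (i + 1) := hr1
  -- Step 1: a vertex of F_{i+1}(c₀) not adjacent to r₀
  rw [G.aux_Fk_succ hj] at hc'F
  simp only [Set.mem_iUnion] at hc'F
  obtain ⟨w, hwF, hc'fk⟩ := hc'F
  have hwr : ¬ G.Adj w r₀ := by
    intro hwr
    rcases G.aux_fk_cases hc'fk with ⟨rfl, _⟩ | ⟨_, hsc⟩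
    · exact hc'r hwr
    · exact hc'r (hsc.2.2.1 r₀ hr0S hwr)
  -- Step 2: a vertex of F_{i+1}(c₁) of rank ≥ i+1
  obtain ⟨x, hxF, hcrx⟩ := G.aux_exists_mem_Fk hj hr1 c₁
  by_cases hgood : ∃ r₁, G.Adj r₀ r₁ ∧ ((i + 1 : ℕ) : ℕ∞) ≤ G.cr r₁ ∧ ¬ G.Adj x r₁
  · obtain ⟨r₁, h1, h2, h3⟩ := hgood
    exact ⟨r₁, h1, h2, x, hxF, h3⟩
  · exfalso
    push_neg at hgood
    have hxS : x ∈ G.GkSet (i + 1) := hcrx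
    have hnsc : ¬ G.IsStrictCorner (G.lvl i) r₀ := by
      intro hc
      have h2 : ((i + 1 : ℕ) : ℕ∞) < G.cr r₀ := (G.aux_coe_succ_le_cr_iff (i + 1) r₀).1 hr2
      exact ((G.aux_cr_gt_iff (i + 1) r₀).1 h2) i (by omega)
        ⟨G.aux_mem_lvl_of_cr_gt hwitr, Or.inl hc⟩
    have hcont : ∀ u ∈ G.GkSet (i + 1), G.Adj r₀ u → G.Adj x u := fun u hu ha =>
      hgood u ha hu
    have hrev : ∀ u ∈ G.GkSet (i + 1), G.Adj x u → G.Adj r₀ u := by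
      by_contra hcr
      push_neg at hcr
      obtain ⟨u, hu, hxu, hru⟩ := hcr
      refine hnsc ⟨x, ?_⟩
      rw [← G.aux_GkSet_eq_lvl hwitr]
      exact ⟨hxS, hr0S, hcont, u, hu, hxu, hru⟩
    have hwx : G.Adj w x := G.aux_adj_of_mem_Fk hadj hj w x hwF hxF
    have hwS : w ∈ G.GkSet (i + 1) := G.aux_cr_ge_of_mem_Fk hj c₀ w hwF
    exact hwr (G.symm _ _ (hrev w hwS (G.symm _ _ hwx)))
end
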